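/- In every execution of the Hemlock transition-system model, the entry-doorstep SWAP on a lock L executed by a thread T never returns some T; that is, a thread never observes itself as its own predecessor in the queue for L. -/

import Mathlib

namespace Hemlock

/-- Program counter locations of a thread in the Hemlock algorithm. -/
inductive PC where
  | remainder  -- in the remainder section
  | entrySpin  -- in the entry code, spinning on the predecessor's Grant field
  | crit       -- in the critical section
  | exitCAS    -- in the exit code, about to perform the CAS on Tail
  | exitDoor   -- in the exit code, about to perform the exit doorstep (write Grant self := some L)
  | exitSpin   -- in the exit code, spinning on its own Grant field
deriving DecidableEq

/-- A global state of the Hemlock transition system. -/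
structure St (Thread Lock : Type) where
  Tail : Lock → Option Thread        -- the Tail field of each lock
  Grant : Thread → Option Lock       -- the Grant field of each thread
  pc : Thread → PC                   -- program counter of each thread
  lk : Thread → Option Lock          -- the lock currently being acquired/released by each thread
  pred : Thread → Option Thread      -- value returned by each thread's last SWAP

variable {Thread Lock : Type} [DecidableEq Thread] [DecidableEq Lock]

/-- The initial state: all Tail and Grant fields are none, all threads in the remainder. -/
def initSt : St Thread Lock :=
  ⟨fun _ => none, fun _ => none, fun _ => .remainder, fun _ => none, fun _ => none⟩

/-- One atomic transition of thread `t`. -/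
inductive Step (t : Thread) : St Thread Lock → St Thread Lock → Prop where
  /-- a step inside the remainder section -/
  | remainderStay (s : St Thread Lock) (h : s.pc t = .remainder) :
      Step t s s
  /-- the entry doorstep for lock `L`: atomic SWAP on `Tail L`, storing the old value in `pred`;
      if the SWAP returned `none` the thread enters the critical section, else it spins -/
  | doorstep (s : St Thread Lock) (L : Lock) (h : s.pc t = .remainder) :
      Step t s ⟨Function.update s.Tail L (some t), s.Grant,
        Function.update s.pc t (if s.Tail L = none then .crit else .entrySpin),
        Function.update s.lk t (some L),
        Function.update s.pred t (s.Tail L)⟩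
  /-- entry-code busy-wait loop: read `Grant p`; it is not yet `some L`, keep spinning -/
  | spinWait (s : St Thread Lock) (p : Thread) (L : Lock)
      (h : s.pc t = .entrySpin) (hp : s.pred t = some p) (hl : s.lk t = some L)
      (hg : s.Grant p ≠ some L) :
      Step t s s
  /-- entry-code busy-wait loop: read `Grant p = some L`; write `Grant p := none`
      and enter the critical section -/
  | spinAcquire (s : St Thread Lock) (p : Thread) (L : Lock)
      (h : s.pc t = .entrySpin) (hp : s.pred t = some p) (hl : s.lk t = some L)
      (hg : s.Grant p = some L) :
      Step t s ⟨s.Tail, Function.update s.Grant p none,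
        Function.update s.pc t .crit, s.lk, s.pred⟩
  /-- a step inside the critical section -/
  | critStay (s : St Thread Lock) (h : s.pc t = .crit) :
      Step t s s
  /-- leave the critical section and begin the exit code -/
  | exitStart (s : St Thread Lock) (h : s.pc t = .crit) :
      Step t s ⟨s.Tail, s.Grant, Function.update s.pc t .exitCAS, s.lk, s.pred⟩
  /-- successful CAS: `Tail L = some self`, so set `Tail L := none` and
      complete the exit code, returning to the remainder section -/
  | casSucc (s : St Thread Lock) (L : Lock)
      (h : s.pc t = .exitCAS) (hl : s.lk t = some L) (ht : s.Tail L = some t) :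
      Step t s ⟨Function.update s.Tail L none, s.Grant,
        Function.update s.pc t .remainder, Function.update s.lk t none, s.pred⟩
  /-- failed CAS: `Tail L ≠ some self`; proceed to the exit doorstep -/
  | casFail (s : St Thread Lock) (L : Lock)
      (h : s.pc t = .exitCAS) (hl : s.lk t = some L) (ht : s.Tail L ≠ some t) :
      Step t s ⟨s.Tail, s.Grant, Function.update s.pc t .exitDoor, s.lk, s.pred⟩
  /-- the exit doorstep: write `Grant self := some L` and start spinning on `Grant self` -/
  | exitDoorstep (s : St Thread Lock) (L : Lock)
      (h : s.pc t = .exitDoor) (hl : s.lk t = some L) :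
      Step t s ⟨s.Tail, Function.update s.Grant t (some L),
        Function.update s.pc t .exitSpin, s.lk, s.pred⟩
  /-- exit-code busy-wait loop: read `Grant self`; it is not yet `none`, keep spinning -/
  | exitSpinWait (s : St Thread Lock) (h : s.pc t = .exitSpin) (hg : s.Grant t ≠ none) :
      Step t s s
  /-- exit-code busy-wait loop: read `Grant self = none`; complete the exit code,
      returning to the remainder section -/
  | exitDone (s : St Thread Lock) (h : s.pc t = .exitSpin) (hg : s.Grant t = none) :
      Step t s ⟨s.Tail, s.Grant, Function.update s.pc t .remainder,
        Function.update s.lk t none, s.pred⟩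

/-- An execution of the Hemlock transition system: an infinite sequence of states starting
    from the initial state, where each step is one transition of the scheduled thread;
    every thread whose program counter is in the entry, exit or critical section eventually
    takes another step, and every thread leaves each critical section after finitely
    many steps. -/
structure Execution (Thread Lock : Type) [DecidableEq Thread] [DecidableEq Lock]
    [Fintype Thread] where
  states : ℕ → St Thread Lock
  sched : ℕ → Thread
  init : states 0 = initSt
  steps : ∀ n, Step (sched n) (states n) (states (n + 1))
  fair : ∀ n t, (states n).pc t ≠ PC.remainder → ∃ m, n ≤ m ∧ sched m = t
  critFinite : ∀ n t, (states n).pc t = PC.crit → ∃ m, n ≤ m ∧ (states m).pc t ≠ PC.crit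

variable [Fintype Thread]

/-- Thread `t` executes the entry doorstep (the SWAP) for lock `L` at time `n`. -/
def doorstepAt (E : Execution Thread Lock) (n : ℕ) (t : Thread) (L : Lock) : Prop :=
  E.sched n = t ∧ (E.states n).pc t = PC.remainder ∧
    (E.states (n + 1)).pc t ≠ PC.remainder ∧ (E.states (n + 1)).lk t = some L

/-- Thread `t` performs the CAS step of the exit code for lock `L` at time `n`
    (successful or not). -/
def casAt (E : Execution Thread Lock) (n : ℕ) (t : Thread) (L : Lock) : Prop :=
  E.sched n = t ∧ (E.states n).pc t = PC.exitCAS ∧ (E.states n).lk t = some L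

/-- Thread `t` performs the exit doorstep (the write `Grant t := some L`) at time `n`. -/
def exitDoorAt (E : Execution Thread Lock) (n : ℕ) (t : Thread) (L : Lock) : Prop :=
  E.sched n = t ∧ (E.states n).pc t = PC.exitDoor ∧ (E.states n).lk t = some L

/-- Thread `t` is in the critical section protected by `L` in state `s`. -/
def inCS (s : St Thread Lock) (t : Thread) (L : Lock) : Prop :=
  s.pc t = PC.crit ∧ s.lk t = some L

/-- Thread `t` is in the entry code for lock `L` in state `s`. -/
def inEntry (s : St Thread Lock) (t : Thread) (L : Lock) : Prop :=
  s.pc t = PC.entrySpin ∧ s.lk t = some L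

/-- Thread `t` enters the critical section protected by `L` at step `m`. -/
def entersCSAt (E : Execution Thread Lock) (m : ℕ) (t : Thread) (L : Lock) : Prop :=
  E.sched m = t ∧ (E.states m).pc t ≠ PC.crit ∧
    (E.states (m + 1)).pc t = PC.crit ∧ (E.states (m + 1)).lk t = some L

/-- Thread `t` completes its critical section protected by `L` at step `k`
    (leaving the critical section and beginning the exit code). -/
def exitsCSAt (E : Execution Thread Lock) (k : ℕ) (t : Thread) (L : Lock) : Prop :=
  E.sched k = t ∧ (E.states k).pc t = PC.crit ∧ (E.states k).lk t = some L ∧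
    (E.states (k + 1)).pc t ≠ PC.crit

/-- Thread `t` completes the exit code for lock `L` at step `k`
    (returning to the remainder section). -/
def completesExitAt (E : Execution Thread Lock) (k : ℕ) (t : Thread) (L : Lock) : Prop :=
  E.sched k = t ∧ (E.states k).lk t = some L ∧
    (E.states k).pc t ≠ PC.remainder ∧ (E.states (k + 1)).pc t = PC.remainder

/-- `m` is the first time at or after `n` at which thread `t` enters the
    critical section protected by `L`. -/
def firstEntryAfter (E : Execution Thread Lock) (n m : ℕ) (t : Thread) (L : Lock) : Prop :=
  n ≤ m ∧ entersCSAt E m t L ∧ ∀ k, n ≤ k → k < m → ¬ entersCSAt E k t L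

/-- At time `n`, thread `T` is spinning in the entry code waiting for `Grant w`
    to become `some L`: its next step reads `Grant w` inside the entry-code
    busy-wait loop with current lock `L` and `pred = some w`. -/
def spinningEntryFor (E : Execution Thread Lock) (n : ℕ) (T w : Thread) (L : Lock) : Prop :=
  (E.states n).pc T = PC.entrySpin ∧ (E.states n).pred T = some w ∧
    (E.states n).lk T = some L

/-- At time `n`, thread `T` is spinning on the word `Grant w`: its next step reads
    `Grant w` inside one of the two busy-wait loops (the entry-code loop with
    `pred = some w`, or the exit-code loop executed by `w` itself). -/
def spinningOn (E : Execution Thread Lock) (n : ℕ) (T w : Thread) : Prop :=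
  ((E.states n).pc T = PC.entrySpin ∧ (E.states n).pred T = some w) ∨
    (T = w ∧ (E.states n).pc T = PC.exitSpin)

/-- Lock `L` is associated with thread `T` at time `n`: `T` has executed the entry
    doorstep for `L` and has not yet completed the exit code for `L`. -/
def associated (E : Execution Thread Lock) (n : ℕ) (T : Thread) (L : Lock) : Prop :=
  ∃ m, m < n ∧ doorstepAt E m T L ∧ ∀ k, m < k → k < n → ¬ completesExitAt E k T L

end Hemlock

namespace Hemlock

variable {Thread Lock : Type}

/-- The program counters at which a thread's SWAP may still be the last one on its lock. -/
def PC.IsQueued : PC → Prop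
  | .entrySpin | .crit | .exitCAS => True
  | _ => False

def TailInvariant (s : St Thread Lock) : Prop :=
  ∀ L t, s.Tail L = some t → s.lk t = some L ∧ (s.pc t).IsQueued

theorem TailInvariant.tail_ne_of_remainder {s : St Thread Lock} (hs : TailInvariant s)
    {t : Thread} (ht : s.pc t = .remainder) (L : Lock) : s.Tail L ≠ some t := by
  intro hT
  have := (hs L t hT).2
  simp [ht, PC.IsQueued] at this

variable [DecidableEq Thread] [DecidableEq Lock]

/- A thread leaves the queued states only through a CAS: the successful one clears its tail, the
failing one is guarded by `Tail L ≠ some t`, and `lk t` is the only lock whose tail `t` can be. -/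
theorem TailInvariant.step {s s' : St Thread Lock} {u : Thread} (hs : TailInvariant s)
    (hstep : Step u s s') : TailInvariant s' := by
  cases hstep <;> intro L t hT
  all_goals grind [TailInvariant, PC.IsQueued, Function.update_apply]

theorem Execution.tailInvariant [Fintype Thread] (E : Execution Thread Lock) (n : ℕ) :
    TailInvariant (E.states n) := by
  induction n with
  | zero => simp [E.init, TailInvariant, initSt]
  | succ n ih => exact ih.step (E.steps n)

theorem Step.pred_eq_tail_of_leave_remainder {s s' : St Thread Lock} {t : Thread} {L : Lock}
    (hstep : Step t s s') (hpc : s.pc t = .remainder) (hpc' : s'.pc t ≠ .remainder)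
    (hlk : s'.lk t = some L) : s'.pred t = s.Tail L := by
  cases hstep with
  | remainderStay => exact absurd hpc hpc'
  | doorstep L' =>
    obtain rfl : L' = L := by simpa using hlk
    simp
  | _ => simp_all

/-- The entry-doorstep SWAP on a lock `L` executed by a thread `t` never returns
`some t`: a thread never observes itself as its own predecessor in the queue for `L`. -/
theorem swap_never_returns_self {Thread Lock : Type} [DecidableEq Thread] [DecidableEq Lock]
    [Fintype Thread] (E : Execution Thread Lock) (L : Lock) (t : Thread) (n : ℕ)
    (h : doorstepAt E n t L) :
    (E.states n).Tail L ≠ some t ∧ (E.states (n + 1)).pred t ≠ some t := by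
  obtain ⟨hsched, hpc, hpc', hlk⟩ := h
  have htail : (E.states n).Tail L ≠ some t :=
    (E.tailInvariant n).tail_ne_of_remainder hpc L
  have hswap := E.steps n
  rw [hsched] at hswap
  exact ⟨htail, hswap.pred_eq_tail_of_leave_remainder hpc hpc' hlk ▸ htail⟩

end Hemlock
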